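/- In an equitable 2-partition of Q_{12} with quotient matrix [[3,9],[7,5]], the set of nonzero Fourier coefficients of the associated function consists of exactly 63 words of weight 8, each coefficient being ±1, and the 63 quadruples of zero-coordinates of these words form a (3,4,12)-covering in which exactly 16 triples (counted with multiplicity of overcovering divided by 2) are covered more than once; every triple is covered an odd number of times. -/

import Mathlib

attribute [local instance] Classical.propDecidable
noncomputable section

/-- Vertices of the `n`-cube: binary words of length `n` over GF(2). -/
abbrev Vtx (n : ℕ) := Fin n → ZMod 2

/-- The (Hamming) weight of a word: the number of ones. -/
def wt {n : ℕ} (x : Vtx n) : ℕ := (Finset.univ.filter (fun i => x i = 1)).card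

/-- The inner product `x₁y₁ + ⋯ + xₙyₙ` computed as a natural number. -/
def ip {n : ℕ} (x y : Vtx n) : ℕ := ∑ i, (x i).val * (y i).val

/-- The character `χ_y(x) = (−1)^⟨x,y⟩`. -/
def chi {n : ℕ} (y x : Vtx n) : ℚ := (-1) ^ ip x y

/-- `leq z x` means `z ≼ x`, i.e. `zᵢ ≤ xᵢ` for all `i`. -/
def leq {n : ℕ} (x y : Vtx n) : Prop := ∀ i, (x i).val ≤ (y i).val

/-- The Fourier coefficient `f̂(y) = 2^{−n} Σ_z f(z)(−1)^⟨z,y⟩`. -/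
def hat {n : ℕ} (f : Vtx n → ℚ) (y : Vtx n) : ℚ :=
  (∑ z, f z * (-1 : ℚ) ^ ip z y) / 2 ^ n

/-- Adjacency in the `n`-cube: the words differ in exactly one coordinate. -/
def adj {n : ℕ} (x y : Vtx n) : Prop :=
  (Finset.univ.filter (fun i => x i ≠ y i)).card = 1

/-- `(C0, complement of C0)` is an equitable partition with quotient matrix
`[[a,b],[c,d]]`. -/
def IsEqPartition {n : ℕ} (C0 : Finset (Vtx n)) (a b c d : ℕ) : Prop :=
  (∀ x ∈ C0, (Finset.univ.filter (fun y => adj x y ∧ y ∈ C0)).card = a ∧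
             (Finset.univ.filter (fun y => adj x y ∧ y ∉ C0)).card = b) ∧
  (∀ x ∉ C0, (Finset.univ.filter (fun y => adj x y ∧ y ∈ C0)).card = c ∧
             (Finset.univ.filter (fun y => adj x y ∧ y ∉ C0)).card = d)

/-- The associated function of an equitable partition: `b` on `C0`, `−c` outside. -/
def assoc {n : ℕ} (C0 : Finset (Vtx n)) (b c : ℕ) : Vtx n → ℚ :=
  fun x => if x ∈ C0 then (b : ℚ) else -(c : ℚ)

/-- The face `Γ_u^v = {z + v : z ≼ u}` (of dimension `wt u`). -/
def face {n : ℕ} (u v : Vtx n) : Finset (Vtx n) :=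
  Finset.univ.filter (fun x => ∃ z, leq z u ∧ x = z + v)

/-- The set of nonzeros of the Fourier transform of the associated function. -/
def nonzeros (C0 : Finset (Vtx 12)) : Finset (Vtx 12) :=
  Finset.univ.filter (fun x : Vtx 12 => hat (assoc C0 9 7) x ≠ 0)

/-- The number of blocks (quadruples of zero coordinates of nonzeros)
containing the triple (or set) `T` of coordinates. -/
def cnt (C0 : Finset (Vtx 12)) (T : Finset (Fin 12)) : ℕ :=
  ((nonzeros C0).filter (fun x => ∀ i ∈ T, x i = 0)).card


/-!
The associated function `f = assoc C0 9 7` is an eigenfunction of the cube with eigenvalue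
`3 - 7 = -4`, while the character `χ_w` has eigenvalue `12 - 2 wt w`; so `f̂` is supported on words
of weight 8, i.e. on the 4-sets `B` of their zero coordinates. Summing `f` over the subcube
spanned by a set `T` of coordinates gives `2^|T| Σ_{B ⊇ T} f̂(B) = 9·2^|T| - 16 k`, with `k` the
number of points of the subcube outside `C0`. For `|T| = 4` this makes every `f̂(B)` an integer,
and for `|T| = 2, 3` it makes `Σ_{B ⊇ T} f̂(B)` odd. Hence the blocks with odd coefficient contain
every pair and every triple an odd number of times, and a counting argument shows that there are
at least 63 of them. Parseval gives `Σ f̂² = 9·7 = 63`, so these blocks are exactly the support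
of `f̂` and all coefficients are `±1`.
-/

open Finset

section Cube

variable {n : ℕ}

lemma zmod_two_eq_zero_or_one : ∀ b : ZMod 2, b = 0 ∨ b = 1 := by decide

lemma vtx_add_eq_zero_iff {x y : Vtx n} : x + y = 0 ↔ x = y := by
  rw [add_eq_zero_iff_eq_neg]
  simp [funext_iff, ZMod.neg_eq_self_mod_two]

lemma neg_one_pow_eq_of_natCast_eq {a b : ℕ} (h : (a : ZMod 2) = b) :
    (-1 : ℚ) ^ a = (-1) ^ b := by
  rw [neg_one_pow_eq_pow_mod_two, neg_one_pow_eq_pow_mod_two (R := ℚ) b,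
    (ZMod.natCast_eq_natCast_iff' a b 2).mp h]

lemma natCast_ip (x y : Vtx n) : (ip x y : ZMod 2) = ∑ i, x i * y i := by
  simp [ip]

lemma neg_one_pow_ip_add_left (x y w : Vtx n) :
    (-1 : ℚ) ^ ip (x + y) w = (-1) ^ ip x w * (-1) ^ ip y w := by
  rw [← pow_add]
  apply neg_one_pow_eq_of_natCast_eq
  simp only [Nat.cast_add, natCast_ip, Pi.add_apply, add_mul, sum_add_distrib]

lemma ip_single_one_left (i : Fin n) (w : Vtx n) : ip (Pi.single i 1) w = (w i).val := by
  simp [ip, Pi.single_apply, apply_ite ZMod.val, ZMod.val_one]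

def subcube (S : Finset (Fin n)) : Finset (Vtx n) :=
  Fintype.piFinset fun i => if i ∈ S then univ else {0}

lemma mem_subcube {S : Finset (Fin n)} {z : Vtx n} : z ∈ subcube S ↔ ∀ i ∉ S, z i = 0 := by
  simp only [subcube, Fintype.mem_piFinset]
  refine forall_congr' fun i => ?_
  split_ifs <;> simp_all

lemma card_subcube (S : Finset (Fin n)) : #(subcube S) = 2 ^ #S := by
  simp [subcube, Fintype.card_piFinset, apply_ite card, prod_ite_mem]

lemma subcube_univ : subcube (univ : Finset (Fin n)) = univ := by
  ext z
  simp [mem_subcube]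

lemma sum_neg_one_pow_val_mul_val (a : ZMod 2) :
    ∑ b : ZMod 2, (-1 : ℚ) ^ (a.val * b.val) = if a = 0 then 2 else 0 := by
  rw [show ∀ g : ZMod 2 → ℚ, ∑ b, g b = g 0 + g 1 from Fin.sum_univ_two]
  rcases zmod_two_eq_zero_or_one a with rfl | rfl
  · norm_num
  · simp [ZMod.val_one]

lemma sum_subcube_neg_one_pow_ip (S : Finset (Fin n)) (x : Vtx n) :
    ∑ y ∈ subcube S, (-1 : ℚ) ^ ip x y = if ∀ i ∈ S, x i = 0 then 2 ^ #S else 0 := by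
  have factor : ∀ i, ∑ b ∈ (if i ∈ S then univ else {0} : Finset (ZMod 2)),
      (-1 : ℚ) ^ ((x i).val * b.val) = if i ∈ S then (if x i = 0 then 2 else 0) else 1 := by
    intro i
    split_ifs <;> simp_all [sum_neg_one_pow_val_mul_val]
  calc ∑ y ∈ subcube S, (-1 : ℚ) ^ ip x y
      = ∏ i, ∑ b ∈ (if i ∈ S then univ else {0} : Finset (ZMod 2)),
          (-1 : ℚ) ^ ((x i).val * b.val) := by
        simp only [prod_univ_sum, ip, ← prod_pow_eq_pow_sum, subcube]
    _ = if ∀ i ∈ S, x i = 0 then 2 ^ #S else 0 := by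
        rw [prod_congr rfl fun i _ => factor i, prod_ite_mem, univ_inter, prod_ite_zero,
          prod_const]
        congr

lemma sum_neg_one_pow_ip (x : Vtx n) :
    ∑ y, (-1 : ℚ) ^ ip x y = if x = 0 then 2 ^ n else 0 := by
  rw [← subcube_univ, sum_subcube_neg_one_pow_ip]
  simp [funext_iff]

lemma sum_neg_one_pow_ip_mul_neg_one_pow_ip (z x : Vtx n) :
    ∑ y, (-1 : ℚ) ^ ip z y * (-1) ^ ip x y = if z = x then 2 ^ n else 0 := by
  simp only [← neg_one_pow_ip_add_left, sum_neg_one_pow_ip, vtx_add_eq_zero_iff]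

lemma sum_hat_mul_neg_one_pow_ip (f : Vtx n → ℚ) (x : Vtx n) :
    ∑ y, hat f y * (-1) ^ ip x y = f x := by
  simp only [hat, div_mul_eq_mul_div, ← sum_div, sum_mul, mul_assoc]
  rw [sum_comm]
  simp only [← mul_sum, sum_neg_one_pow_ip_mul_neg_one_pow_ip, mul_ite, mul_zero, sum_ite_eq',
    mem_univ, if_true]
  field_simp

lemma sum_hat_sq (f : Vtx n → ℚ) : ∑ y, hat f y ^ 2 = (∑ z, f z ^ 2) / 2 ^ n := by
  conv_lhs => enter [2, y]; rw [sq]; enter [2]; rw [hat]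
  simp only [mul_div_assoc', ← sum_div, mul_sum]
  rw [sum_comm]
  simp only [mul_left_comm (hat f _), ← mul_sum, sum_hat_mul_neg_one_pow_ip, sq]

lemma pow_card_mul_sum_hat_subcube_compl (f : Vtx n → ℚ) (T : Finset (Fin n)) :
    2 ^ #T * ∑ y ∈ subcube Tᶜ, hat f y = ∑ z ∈ subcube T, f z := by
  simp only [hat, ← sum_div, mul_div_assoc', mul_sum]
  rw [sum_comm]
  simp only [← mul_sum, sum_subcube_neg_one_pow_ip, mul_ite, mul_zero]
  have hpow : (2 : ℚ) ^ #T * 2 ^ #Tᶜ = 2 ^ n := by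
    rw [← pow_add, card_add_card_compl, Fintype.card_fin]
  have hfilter : ({x | ∀ i ∈ Tᶜ, x i = 0} : Finset (Vtx n)) = subcube T := by
    ext x
    simp [mem_subcube]
  rw [← sum_filter, hfilter, sum_div]
  refine sum_congr rfl fun x _ => ?_
  rw [mul_left_comm, hpow]
  field_simp

lemma zmod_two_eq_add_ite_iff (a b : ZMod 2) (p : Prop) [Decidable p] :
    b = a + (if p then 1 else 0) ↔ (a ≠ b ↔ p) := by
  rcases zmod_two_eq_zero_or_one a with rfl | rfl <;>
    rcases zmod_two_eq_zero_or_one b with rfl | rfl <;> by_cases p <;>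
    simp_all [CharTwo.add_self_eq_zero]

lemma adj_iff_exists_eq_add_single {x y : Vtx n} : adj x y ↔ ∃ i, y = x + Pi.single i 1 := by
  simp only [adj, card_eq_one, Finset.ext_iff, mem_filter, mem_univ, true_and, mem_singleton,
    funext_iff, Pi.add_apply, Pi.single_apply, zmod_two_eq_add_ite_iff]

lemma adj_comm {x y : Vtx n} : adj x y ↔ adj y x := by
  simp only [adj, ne_comm]

lemma single_one_injective : Function.Injective fun i : Fin n => (Pi.single i 1 : Vtx n) := by
  intro i j hij
  by_contra hne
  simpa [Pi.single_apply, hne] using congrFun hij i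

lemma sum_adj (x : Vtx n) (g : Vtx n → ℚ) :
    ∑ y with adj x y, g y = ∑ i, g (x + Pi.single i 1) := by
  have hnbr : ({y | adj x y} : Finset (Vtx n)) = univ.image fun i => x + Pi.single i 1 := by
    ext y
    simp [adj_iff_exists_eq_add_single, eq_comm]
  rw [hnbr, sum_image fun i _ j _ hij => single_one_injective (add_left_cancel hij)]

lemma hat_sum_add_single (f : Vtx n → ℚ) (w : Vtx n) :
    hat (fun x => ∑ i, f (x + Pi.single i 1)) w = (∑ i, (-1 : ℚ) ^ (w i).val) * hat f w := by
  have shift : ∀ i, ∑ z, f (z + Pi.single i 1) * (-1 : ℚ) ^ ip z w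
      = (-1) ^ (w i).val * ∑ z, f z * (-1) ^ ip z w := by
    intro i
    rw [mul_sum]
    refine Fintype.sum_equiv (Equiv.addRight (Pi.single i 1)) _ _ fun z => ?_
    have hsq : ((-1 : ℚ) ^ (w i).val) ^ 2 = 1 := by
      rw [← pow_mul, mul_comm, pow_mul, neg_one_sq, one_pow]
    rw [Equiv.coe_addRight, neg_one_pow_ip_add_left, ip_single_one_left]
    linear_combination (-(f (z + Pi.single i 1) * (-1) ^ ip z w)) * hsq
  simp only [hat, sum_mul, mul_div_assoc']
  rw [sum_comm]
  exact congrArg (· / _) (sum_congr rfl fun i _ => shift i)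

def zeroSet (y : Vtx n) : Finset (Fin n) := {i | y i = 0}

lemma card_zeroSet_add_wt (y : Vtx n) : #(zeroSet y) + wt y = n := by
  have hone : ∀ i, y i = 1 ↔ ¬y i = 0 := fun i => by
    rcases zmod_two_eq_zero_or_one (y i) with h | h <;> simp [h]
  simp only [zeroSet, wt, hone, card_filter_add_card_filter_not, card_univ, Fintype.card_fin]

lemma zeroSet_injective : Function.Injective (zeroSet (n := n)) := by
  intro x y hxy
  funext i
  have hi : x i = 0 ↔ y i = 0 := by simpa [zeroSet] using congrArg (i ∈ ·) hxy
  rcases zmod_two_eq_zero_or_one (x i) with h | h <;>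
    rcases zmod_two_eq_zero_or_one (y i) with h' | h' <;> simp_all

lemma sum_neg_one_pow_val (w : Vtx n) : ∑ i, (-1 : ℚ) ^ (w i).val = #(zeroSet w) - wt w := by
  have hterm : ∀ i, (-1 : ℚ) ^ (w i).val
      = (if w i = 0 then 1 else 0) - (if w i = 1 then 1 else 0) := by
    intro i
    rcases zmod_two_eq_zero_or_one (w i) with h | h <;> simp [h, ZMod.val_one]
  simp only [hterm, sum_sub_distrib, sum_boole, zeroSet, wt]

lemma sum_assoc (C0 : Finset (Vtx n)) (b c : ℕ) (s : Finset (Vtx n)) :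
    ∑ z ∈ s, assoc C0 b c z = b * #s - (b + c) * #{z ∈ s | z ∉ C0} := by
  have hterm : ∀ z, assoc C0 b c z = b - (b + c) * (if z ∉ C0 then 1 else 0 : ℚ) := by
    intro z
    by_cases hz : z ∈ C0 <;> simp [assoc, hz]
  simp only [hterm, sum_sub_distrib, ← mul_sum, sum_boole, sum_const, nsmul_eq_mul]
  ring

lemma pow_card_mul_sum_hat_assoc (C0 : Finset (Vtx n)) (b c : ℕ) (T : Finset (Fin n)) :
    2 ^ #T * ∑ y with T ⊆ zeroSet y, hat (assoc C0 b c) y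
      = b * 2 ^ #T - (b + c) * #{z ∈ subcube T | z ∉ C0} := by
  have hvanish : ({y | T ⊆ zeroSet y} : Finset (Vtx n)) = subcube Tᶜ := by
    ext y
    simp [mem_subcube, zeroSet, subset_iff]
  rw [hvanish, pow_card_mul_sum_hat_subcube_compl, sum_assoc, card_subcube]
  push_cast
  ring

end Cube

namespace IsEqPartition

variable {n a b c d : ℕ} {C0 : Finset (Vtx n)}

lemma sum_assoc_add_single (h : IsEqPartition C0 a b c d) (hdeg : a + b = c + d) (x : Vtx n) :
    ∑ i, assoc C0 b c (x + Pi.single i 1) = ((a : ℚ) - c) * assoc C0 b c x := by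
  have hin : ∑ y with adj x y ∧ y ∈ C0, assoc C0 b c y
      = ∑ y with adj x y ∧ y ∈ C0, (b : ℚ) :=
    sum_congr rfl fun y hy => if_pos (mem_filter.mp hy).2.2
  have hout : ∑ y with adj x y ∧ y ∉ C0, assoc C0 b c y
      = ∑ y with adj x y ∧ y ∉ C0, -(c : ℚ) :=
    sum_congr rfl fun y hy => if_neg (mem_filter.mp hy).2.2
  rw [← sum_adj, ← sum_filter_add_sum_filter_not _ (· ∈ C0), filter_filter, filter_filter,
    hin, hout]
  simp only [sum_const, nsmul_eq_mul, mul_neg, ← sub_eq_add_neg]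
  by_cases hx : x ∈ C0
  · simp only [(h.1 x hx).1, (h.1 x hx).2, assoc, if_pos hx]
    ring
  · simp only [(h.2 x hx).1, (h.2 x hx).2, assoc, if_neg hx]
    have : (a : ℚ) + b = c + d := by exact_mod_cast hdeg
    linear_combination (c : ℚ) * this

lemma card_zeroSet_sub_wt_of_hat_ne_zero (h : IsEqPartition C0 a b c d) (hdeg : a + b = c + d)
    {w : Vtx n} (hw : hat (assoc C0 b c) w ≠ 0) : (#(zeroSet w) : ℚ) - wt w = a - c := by
  have heig := hat_sum_add_single (assoc C0 b c) w
  have hscale : hat (fun x => ((a : ℚ) - c) * assoc C0 b c x) w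
      = (a - c) * hat (assoc C0 b c) w := by
    simp only [hat, mul_assoc, ← mul_sum, mul_div_assoc]
  rw [funext (h.sum_assoc_add_single hdeg), hscale, sum_neg_one_pow_val] at heig
  exact (mul_right_cancel₀ hw heig).symm

lemma mul_card_eq (h : IsEqPartition C0 a b c d) : b * #C0 = c * #C0ᶜ := by
  have hdc := sum_card_bipartiteAbove_eq_sum_card_bipartiteBelow adj (s := C0) (t := C0ᶜ)
  have habove : ∀ x ∈ C0, #(bipartiteAbove adj C0ᶜ x) = b := fun x hx => by
    rw [← (h.1 x hx).2, bipartiteAbove]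
    congr 1
    ext y
    simp [and_comm]
  have hbelow : ∀ y ∈ C0ᶜ, #(bipartiteBelow adj C0 y) = c := fun y hy => by
    rw [← (h.2 y (mem_compl.mp hy)).1, bipartiteBelow]
    congr 1
    ext x
    simp [and_comm, adj_comm]
  rw [sum_congr rfl habove, sum_congr rfl hbelow, sum_const, sum_const] at hdc
  simpa [mul_comm] using hdc

lemma sum_hat_assoc_sq (h : IsEqPartition C0 a b c d) :
    ∑ y, hat (assoc C0 b c) y ^ 2 = b * c := by
  have hsq : ∑ z, assoc C0 b c z ^ 2 = (b : ℚ) ^ 2 * #C0 + (c : ℚ) ^ 2 * #C0ᶜ := by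
    have hin : ∀ z ∈ C0, assoc C0 b c z ^ 2 = (b : ℚ) ^ 2 := fun z hz => by simp [assoc, hz]
    have hout : ∀ z ∈ C0ᶜ, assoc C0 b c z ^ 2 = (c : ℚ) ^ 2 := fun z hz => by
      simp [assoc, mem_compl.mp hz]
    rw [← sum_add_sum_compl C0, sum_congr rfl hin, sum_congr rfl hout]
    simp [mul_comm]
  have hcard : (#C0 : ℚ) + #C0ᶜ = 2 ^ n := by
    rw [← Nat.cast_add, card_add_card_compl]
    simp
  have hmul : (b : ℚ) * #C0 = c * #C0ᶜ := by exact_mod_cast h.mul_card_eq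
  rw [sum_hat_sq, hsq, div_eq_iff (by positivity)]
  linear_combination ((b : ℚ) - c) * hmul + (b : ℚ) * c * hcard

end IsEqPartition

section OddCover

variable {ι α : Type*} [DecidableEq α] (O : Finset ι)

def coverCount (B : ι → Finset α) (T : Finset α) : ℕ := #{o ∈ O | T ⊆ B o}

lemma coverCount_empty (B : ι → Finset α) : coverCount O B ∅ = #O := by
  simp [coverCount]

lemma sum_coverCount_superset [Fintype α] (B : ι → Finset α) {m : ℕ}
    (hB : ∀ o ∈ O, #(B o) = m) {k : ℕ} (S : Finset α) (hS : #S ≤ k) :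
    ∑ T ∈ powersetCard k univ with S ⊆ T, coverCount O B T
      = (m - #S).choose (k - #S) * coverCount O B S := by
  have hdc := sum_card_bipartiteAbove_eq_sum_card_bipartiteBelow (fun T o => T ⊆ B o)
    (s := {T ∈ powersetCard k univ | S ⊆ T}) (t := O)
  have hbelow : ∀ o ∈ O,
      #(bipartiteBelow (fun T o => T ⊆ B o) {T ∈ powersetCard k univ | S ⊆ T} o)
        = if S ⊆ B o then (m - #S).choose (k - #S) else 0 := by
    intro o ho
    split_ifs with hSo
    · rw [← hB o ho, ← card_filter_powersetCard_subset S (B o) k hSo hS, bipartiteBelow]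
      congr 1
      ext T
      simp only [mem_filter, mem_powersetCard, subset_univ, true_and]
      tauto
    · rw [card_eq_zero, bipartiteBelow, filter_eq_empty_iff]
      exact fun T hT hTo => hSo ((mem_filter.mp hT).2.trans hTo)
  rw [sum_congr rfl hbelow, ← sum_filter, sum_const, smul_eq_mul, mul_comm] at hdc
  exact hdc

variable (B : ι → Finset (Fin 12))

-- For an odd cover number `n`, `n / 2` is half the overcovering `n - 1`.
def excess (S : Finset (Fin 12)) : ℕ :=
  ∑ T ∈ powersetCard 3 univ with S ⊆ T, coverCount O B T / 2

lemma excess_anti {S S' : Finset (Fin 12)} (h : S ⊆ S') : excess O B S' ≤ excess O B S :=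
  sum_le_sum_of_subset (monotone_filter_right _ fun _ _ hT => h.trans hT)

lemma half_coverCount_le_excess {S T : Finset (Fin 12)} (hT : #T = 3) (hST : S ⊆ T) :
    coverCount O B T / 2 ≤ excess O B S :=
  single_le_sum (f := fun T => coverCount O B T / 2) (fun _ _ => Nat.zero_le _)
    (mem_filter.mpr ⟨mem_powersetCard.mpr ⟨subset_univ T, hT⟩, hST⟩)

lemma sum_excess_singleton : ∑ i, excess O B {i} = 3 * excess O B ∅ := by
  simp only [excess, singleton_subset_iff, empty_subset, filter_true, mul_sum]
  rw [sum_comm' (t' := powersetCard 3 univ) (s' := fun T => T)]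
  · refine sum_congr rfl fun T hT => ?_
    rw [sum_const, (mem_powersetCard.mp hT).2, smul_eq_mul]
  · intro i T
    simp [and_comm]

lemma two_mul_excess_add (hB : ∀ o ∈ O, #(B o) = 4)
    (hodd : ∀ T : Finset (Fin 12), #T = 3 → Odd (coverCount O B T))
    (S : Finset (Fin 12)) (hS : #S ≤ 3) :
    2 * excess O B S + (12 - #S).choose (3 - #S) = (4 - #S).choose (3 - #S) * coverCount O B S := by
  have hcard : #{T ∈ powersetCard 3 univ | S ⊆ T} = (12 - #S).choose (3 - #S) := by
    simpa using card_filter_powersetCard_subset S univ 3 (subset_univ S) hS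
  rw [excess, ← sum_coverCount_superset O B hB S hS, ← hcard, card_eq_sum_ones, mul_sum,
    ← sum_add_distrib]
  refine sum_congr rfl fun T hT => Nat.two_mul_div_two_add_one_of_odd (hodd T ?_)
  exact (mem_powersetCard.mp (mem_filter.mp hT).1).2

lemma sum_coverCount_sub_one_add (hB : ∀ o ∈ O, #(B o) = 4)
    (hodd : ∀ T : Finset (Fin 12), #T = 3 → Odd (coverCount O B T)) :
    ∑ T ∈ powersetCard 3 univ, (coverCount O B T - 1) + 220 = 4 * #O := by
  have hempty := two_mul_excess_add O B hB hodd ∅ (by simp)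
  rw [coverCount_empty] at hempty
  norm_num [Nat.choose] at hempty
  rw [← hempty, excess, mul_sum]
  simp only [empty_subset, filter_true]
  refine congrArg (· + 220) (sum_congr rfl fun T hT => ?_)
  have := Nat.two_mul_div_two_add_one_of_odd (hodd T (mem_powersetCard.mp hT).2)
  omega

lemma even_excess_of_card_eq_two (hB : ∀ o ∈ O, #(B o) = 4)
    (hodd : ∀ T : Finset (Fin 12), #T = 2 ∨ #T = 3 → Odd (coverCount O B T))
    {P : Finset (Fin 12)} (hP : #P = 2) : Even (excess O B P) := by
  have hexcess := two_mul_excess_add O B hB (fun T hT => hodd T (Or.inr hT)) P (by omega)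
  obtain ⟨k, hk⟩ := hodd P (Or.inl hP)
  rw [hP] at hexcess
  norm_num [Nat.choose] at hexcess
  exact ⟨k - 2, by omega⟩

-- The excess through a point is `≡ 1 (mod 3)`. Were it `1`, a single triple `T₀ ∋ i` would
-- carry it, and a pair `{i, j} ⊆ T₀` would have odd excess.
lemma four_le_excess_singleton (hB : ∀ o ∈ O, #(B o) = 4)
    (hodd : ∀ T : Finset (Fin 12), #T = 2 ∨ #T = 3 → Odd (coverCount O B T)) (i : Fin 12) :
    4 ≤ excess O B {i} := by
  have hexcess := two_mul_excess_add O B hB (fun T hT => hodd T (Or.inr hT)) {i} (by simp)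
  rw [card_singleton] at hexcess
  norm_num [Nat.choose] at hexcess
  by_contra hlt
  have hone : excess O B {i} = 1 := by omega
  have hsum : ∑ T ∈ powersetCard 3 univ with {i} ⊆ T, coverCount O B T / 2 ≠ 0 := by
    rw [← excess, hone]
    exact one_ne_zero
  obtain ⟨T₀, hT₀, hT₀pos⟩ := exists_ne_zero_of_sum_ne_zero hsum
  rw [mem_filter, mem_powersetCard, singleton_subset_iff] at hT₀
  obtain ⟨⟨-, hT₀3⟩, hiT₀⟩ := hT₀
  obtain ⟨j, hjT₀, hji⟩ : ∃ j ∈ T₀, j ≠ i := exists_mem_ne (by omega) i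
  have hle := excess_anti O B (singleton_subset_iff.mpr (mem_insert_self i {j}))
  have hge := half_coverCount_le_excess O B hT₀3
    (insert_subset hiT₀ (singleton_subset_iff.mpr hjT₀))
  have hpair : excess O B {i, j} = 1 := by omega
  exact Nat.not_even_one (hpair ▸ even_excess_of_card_eq_two O B hB hodd (card_pair hji.symm))

lemma le_card_of_odd_coverCount (hB : ∀ o ∈ O, #(B o) = 4)
    (hodd : ∀ T : Finset (Fin 12), #T = 2 ∨ #T = 3 → Odd (coverCount O B T)) : 63 ≤ #O := by
  have hpoints : ∑ _i : Fin 12, 4 ≤ ∑ i, excess O B {i} :=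
    sum_le_sum fun i _ => four_le_excess_singleton O B hB hodd i
  rw [sum_const, card_univ, Fintype.card_fin, smul_eq_mul, sum_excess_singleton] at hpoints
  have hempty := two_mul_excess_add O B hB (fun T hT => hodd T (Or.inr hT)) ∅ (by simp)
  rw [coverCount_empty] at hempty
  norm_num [Nat.choose] at hempty
  omega

end OddCover

lemma odd_sum_iff_odd_card_odd_int {ι : Type*} (s : Finset ι) (f : ι → ℤ) :
    Odd (∑ i ∈ s, f i) ↔ Odd #{i ∈ s | Odd (f i)} := by
  rw [← ZMod.intCast_eq_one_iff_odd, ← ZMod.natCast_eq_one_iff_odd, natCast_card_filter,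
    Int.cast_sum]
  refine Iff.of_eq (congrArg (· = 1) (sum_congr rfl fun i _ => ?_))
  split_ifs with hi
  · exact ZMod.intCast_eq_one_iff_odd.mpr hi
  · exact ZMod.intCast_eq_zero_iff_even.mpr (Int.not_odd_iff_even.mp hi)

lemma ne_zero_of_odd {m : ℤ} (hm : Odd m) : m ≠ 0 := by
  rintro rfl
  simp at hm

lemma sq_eq_ite_odd_of_sum_sq_le {ι : Type*} [Fintype ι] (g : ι → ℤ)
    (h : ∑ y, g y ^ 2 ≤ #{y | Odd (g y)}) (y : ι) : g y ^ 2 = if Odd (g y) then 1 else 0 := by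
  have hle : ∀ y, (if Odd (g y) then 1 else 0) ≤ g y ^ 2 := by
    intro y
    split_ifs with hy
    · exact one_le_sq_iff_one_le_abs _ |>.mpr (Int.one_le_abs (ne_zero_of_odd hy))
    · positivity
  have hsum : ∑ y, (g y ^ 2 - if Odd (g y) then 1 else 0) = 0 := by
    refine le_antisymm ?_ (sum_nonneg fun y _ => sub_nonneg.mpr (hle y))
    rw [sum_sub_distrib, sum_boole]
    simpa using h
  have := (sum_eq_zero_iff_of_nonneg fun y _ => sub_nonneg.mpr (hle y)).mp hsum y (mem_univ y)
  omega

lemma cnt_eq_coverCount (C0 : Finset (Vtx 12)) (T : Finset (Fin 12)) :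
    cnt C0 T = coverCount (nonzeros C0) zeroSet T := by
  simp [cnt, coverCount, zeroSet, subset_iff]

lemma odd_coverCount_of_hat_eq_intCast {C0 : Finset (Vtx 12)} {g : Vtx 12 → ℤ}
    (hg : ∀ y, hat (assoc C0 9 7) y = g y) {T : Finset (Fin 12)} (hT : #T = 2 ∨ #T = 3) :
    Odd (coverCount {y | Odd (g y)} zeroSet T) := by
  have hsum := pow_card_mul_sum_hat_assoc C0 9 7 T
  simp only [hg] at hsum
  have hint : 2 ^ #T * ∑ y with T ⊆ zeroSet y, g y
      = 9 * 2 ^ #T - 16 * #{z ∈ subcube T | z ∉ C0} := by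
    exact_mod_cast hsum
  have hodd : Odd (∑ y with T ⊆ zeroSet y, g y) := by
    rw [Int.odd_iff]
    rcases hT with hT | hT <;> rw [hT] at hint <;> omega
  rw [odd_sum_iff_odd_card_odd_int, filter_filter] at hodd
  simpa only [coverCount, filter_filter, and_comm] using hodd

namespace IsEqPartition

variable {C0 : Finset (Vtx 12)}

lemma wt_eq_eight_of_hat_ne_zero (h : IsEqPartition C0 3 9 7 5)
    {y : Vtx 12} (hy : hat (assoc C0 9 7) y ≠ 0) : wt y = 8 := by
  have hspec := h.card_zeroSet_sub_wt_of_hat_ne_zero (by norm_num) hy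
  have hsum : (#(zeroSet y) : ℚ) + wt y = 12 := by exact_mod_cast card_zeroSet_add_wt y
  norm_num at hspec
  exact_mod_cast (by linarith : (wt y : ℚ) = 8)

lemma card_zeroSet_eq_four_of_hat_ne_zero (h : IsEqPartition C0 3 9 7 5)
    {y : Vtx 12} (hy : hat (assoc C0 9 7) y ≠ 0) :
    #(zeroSet y) = 4 := by
  have := card_zeroSet_add_wt y
  rw [h.wt_eq_eight_of_hat_ne_zero hy] at this
  omega

lemma exists_hat_eq_intCast (h : IsEqPartition C0 3 9 7 5)
    : ∃ g : Vtx 12 → ℤ, ∀ y, hat (assoc C0 9 7) y = g y := by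
  suffices ∀ y, ∃ m : ℤ, hat (assoc C0 9 7) y = m by
    choose g hg using this
    exact ⟨g, hg⟩
  intro y
  by_cases hy : hat (assoc C0 9 7) y = 0
  · exact ⟨0, by simp [hy]⟩
  have hZ := h.card_zeroSet_eq_four_of_hat_ne_zero hy
  -- `y` is the only word of weight 8 vanishing on `zeroSet y`.
  have hsingle : ∑ y' with zeroSet y ⊆ zeroSet y', hat (assoc C0 9 7) y'
      = hat (assoc C0 9 7) y := by
    refine sum_eq_single_of_mem y (by simp) fun y' hy' hne => ?_
    by_contra hy'0
    have := eq_of_subset_of_card_le (mem_filter.mp hy').2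
      (by rw [hZ, h.card_zeroSet_eq_four_of_hat_ne_zero hy'0])
    exact hne (zeroSet_injective this).symm
  have := pow_card_mul_sum_hat_assoc C0 9 7 (zeroSet y)
  rw [hsingle, hZ] at this
  norm_num at this
  exact ⟨9 - #{z ∈ subcube (zeroSet y) | z ∉ C0}, by push_cast; linarith⟩

lemma sum_sq_eq_of_hat_eq_intCast (h : IsEqPartition C0 3 9 7 5)
    {g : Vtx 12 → ℤ} (hg : ∀ y, hat (assoc C0 9 7) y = g y) :
    ∑ y, g y ^ 2 = 63 := by
  have := h.sum_hat_assoc_sq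
  simp only [hg] at this
  exact_mod_cast this

lemma sq_eq_ite_odd (h : IsEqPartition C0 3 9 7 5)
    {g : Vtx 12 → ℤ} (hg : ∀ y, hat (assoc C0 9 7) y = g y) (y : Vtx 12) :
    g y ^ 2 = if Odd (g y) then 1 else 0 := by
  have hZ : ∀ y ∈ ({y | Odd (g y)} : Finset (Vtx 12)), #(zeroSet y) = 4 := fun y hy => by
    refine h.card_zeroSet_eq_four_of_hat_ne_zero ?_
    rw [hg]
    exact_mod_cast ne_zero_of_odd (mem_filter.mp hy).2
  have hle := le_card_of_odd_coverCount _ zeroSet hZ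
    fun T hT => odd_coverCount_of_hat_eq_intCast hg hT
  refine sq_eq_ite_odd_of_sum_sq_le g ?_ y
  rw [h.sum_sq_eq_of_hat_eq_intCast hg]
  exact_mod_cast hle

lemma nonzeros_eq_filter_odd (h : IsEqPartition C0 3 9 7 5)
    {g : Vtx 12 → ℤ} (hg : ∀ y, hat (assoc C0 9 7) y = g y) :
    nonzeros C0 = ({y | Odd (g y)} : Finset (Vtx 12)) := by
  ext y
  simp only [nonzeros, mem_filter, mem_univ, true_and, hg, Int.cast_ne_zero]
  refine ⟨fun hy => ?_, ne_zero_of_odd⟩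
  by_contra hodd
  simpa [hodd, hy] using h.sq_eq_ite_odd hg y

end IsEqPartition

theorem stmt14 (C0 : Finset (Vtx 12)) (h : IsEqPartition C0 3 9 7 5) :
    (nonzeros C0).card = 63 ∧
    (∀ x ∈ nonzeros C0, wt x = 8 ∧
      (hat (assoc C0 9 7) x = 1 ∨ hat (assoc C0 9 7) x = -1)) ∧
    (∀ T : Finset (Fin 12), T.card = 3 → Odd (cnt C0 T)) ∧
    ∑ T ∈ Finset.powersetCard 3 (Finset.univ : Finset (Fin 12)),
        (cnt C0 T - 1) = 2 * 16 := by
  obtain ⟨g, hg⟩ := h.exists_hat_eq_intCast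
  have hnonzeros := h.nonzeros_eq_filter_odd hg
  have hsq := h.sq_eq_ite_odd hg
  have hcard : #(nonzeros C0) = 63 := by
    have := h.sum_sq_eq_of_hat_eq_intCast hg
    simp only [hsq, sum_boole] at this
    rw [hnonzeros]
    exact_mod_cast this
  have hodd : ∀ T : Finset (Fin 12), #T = 3 → Odd (cnt C0 T) := fun T hT => by
    rw [cnt_eq_coverCount, hnonzeros]
    exact odd_coverCount_of_hat_eq_intCast hg (Or.inr hT)
  refine ⟨hcard, fun x hx => ⟨h.wt_eq_eight_of_hat_ne_zero (mem_filter.mp hx).2, ?_⟩, hodd,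
    ?_⟩
  · rw [hnonzeros, mem_filter] at hx
    have hx1 : g x ^ 2 = 1 := by simpa [hx.2] using hsq x
    rcases sq_eq_one_iff.mp hx1 with hx1 | hx1 <;> simp [hg, hx1]
  · have := sum_coverCount_sub_one_add (nonzeros C0) zeroSet
      (fun y hy => h.card_zeroSet_eq_four_of_hat_ne_zero (mem_filter.mp hy).2)
      fun T hT => cnt_eq_coverCount C0 T ▸ hodd T hT
    simp only [cnt_eq_coverCount]
    omega
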